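/- The profile tree T is accepting (has an infinite branch containing infinitely many F-classes) if and only if there exists a label m that is successful on infinitely many levels. -/

import Mathlib

/-!
Profile trees for Büchi determinization (Fisman–Kupferman–Vardi–Wilke style profiles).
Common definitions: nondeterministic Büchi word automata (NBW), the run DAG `G`,
profiles of nodes, and the pruned run DAG `G'`.
-/

/-- A nondeterministic Büchi word automaton `A = (Alph, Q, Qin, ρ, F)` with `Qin ∩ F = ∅`. -/
structure NBW (Alph Q : Type*) where
  Qin : Set Q
  ρ : Q → Alph → Set Q
  F : Set Q
  disj : Qin ∩ F = ∅

variable {Alph Q : Type*} (A : NBW Alph Q) (w : ℕ → Alph)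

/-- Lexicographic order `L₁ ≤ L₂` on profiles (lists over ℕ). -/
def lexLE (L₁ L₂ : List ℕ) : Prop :=
  List.Lex (· < ·) L₁ L₂ ∨ L₁ = L₂

/-- Strict lexicographic order `L₁ < L₂` on profiles. -/
def lexLT (L₁ L₂ : List ℕ) : Prop :=
  List.Lex (· < ·) L₁ L₂

open Classical in
/-- The profiles of all finite initial runs of `A` (on `w`) to the node `v = (q, i)`:
for each run `p₀,…,p_i` with `p₀ ∈ Qin`, `p_{j+1} ∈ ρ(p_j, w_j)` and `p_i = q`, the
sequence of `F`-visitation labels `f(p₀,0) ⋯ f(p_i,i)` (where `f` is 1 on `F`-nodes, else 0). -/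
def runProfiles (v : Q × ℕ) : Set (List ℕ) :=
  { L | ∃ p : ℕ → Q, p 0 ∈ A.Qin ∧ (∀ j < v.2, p (j + 1) ∈ A.ρ (p j) (w j)) ∧
        p v.2 = v.1 ∧ L = (List.range (v.2 + 1)).map (fun j => if p j ∈ A.F then 1 else 0) }

/-- `v` is a node of the run DAG `G = (V, E)` (equivalently of the pruned DAG `G'`):
there is a finite run of `A` to `v.1` on `w₀ ⋯ w_{v.2 - 1}`. -/
def memV (v : Q × ℕ) : Prop := (runProfiles A w v).Nonempty

/-- `L` is the lexicographically maximal profile among all initial paths to `v`. -/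
def IsMaxProfile (v : Q × ℕ) (L : List ℕ) : Prop :=
  L ∈ runProfiles A w v ∧ ∀ L' ∈ runProfiles A w v, lexLE L' L

open Classical in
/-- The profile `h_v` of a node `v`: the lexicographically maximal profile of an
initial path to `v` (junk value `[]` if `v` is not a node of the DAG). -/
noncomputable def profile (v : Q × ℕ) : List ℕ :=
  if h : ∃ L, IsMaxProfile A w v L then h.choose else []

/-- The edge relation `E` of the run DAG `G`: `E((q,i), (q',i+1))` iff `(q,i) ∈ V`
and `q' ∈ ρ(q, w_i)`. -/
def edgeG (u v : Q × ℕ) : Prop :=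
  memV A w u ∧ v.2 = u.2 + 1 ∧ v.1 ∈ A.ρ u.1 (w u.2)

/-- The edge relation `E'` of the pruned run DAG `G'`: `(u,v) ∈ E` and every
`E`-parent `u'` of `v` satisfies `h_{u'} ≤ h_u`. -/
def edgeG' (u v : Q × ℕ) : Prop :=
  edgeG A w u v ∧ ∀ u', edgeG A w u' v → lexLE (profile A w u') (profile A w u)

/-- The equivalence class (under equality of profiles, levelwise) of a node `u` of `G'`. -/
def classOf (u : Q × ℕ) : Set (Q × ℕ) :=
  { v | memV A w v ∧ v.2 = u.2 ∧ profile A w v = profile A w u }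

/-- `C` is a class (node) of the profile tree `T` on level `i`. -/
def ClassAt (C : Set (Q × ℕ)) (i : ℕ) : Prop :=
  ∃ u, memV A w u ∧ u.2 = i ∧ C = classOf A w u

/-- The child relation of the profile tree `T`: `[v]` is a child of `[u]`
whenever `(u, v) ∈ E'`. -/
def childC (C D : Set (Q × ℕ)) : Prop :=
  ∃ u v, edgeG' A w u v ∧ memV A w v ∧ C = classOf A w u ∧ D = classOf A w v

/-- `D` is a descendant of `C` in `T`: there is a (possibly empty) path from `C` to `D`. -/
def DescC : Set (Q × ℕ) → Set (Q × ℕ) → Prop := Relation.ReflTransGen (childC A w)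

/-- `C` is an `F`-class: all its members are `F`-nodes. -/
def IsFClass (C : Set (Q × ℕ)) : Prop := ∀ v ∈ C, v.1 ∈ A.F

/-- `h_C ≤ h_D` for classes `C`, `D` (members of a class all share one profile). -/
def profLE (C D : Set (Q × ℕ)) : Prop :=
  ∀ u ∈ C, ∀ v ∈ D, lexLE (profile A w u) (profile A w v)

/-- `h_C < h_D` for classes `C`, `D`. -/
def profLT (C D : Set (Q × ℕ)) : Prop :=
  ∀ u ∈ C, ∀ v ∈ D, lexLT (profile A w u) (profile A w v)

/-- An infinite branch of `T`: a class on each level, consecutive ones related by the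
child relation. -/
def IsBranch (b : ℕ → Set (Q × ℕ)) : Prop :=
  (∀ i, ClassAt A w (b i) i) ∧ ∀ i, childC A w (b i) (b (i + 1))

/-- The profile tree `T` is accepting: it has an infinite branch containing
infinitely many `F`-classes. -/
def TreeAccepting : Prop :=
  ∃ b : ℕ → Set (Q × ℕ), IsBranch A w b ∧ ∀ n, ∃ i ≥ n, IsFClass A (b i)

/-- `C` (a class on level `i`) is before `D` (a class on level `j`):
`i < j`, or `i = j` and `h_C < h_D`. -/
def BeforeC (C : Set (Q × ℕ)) (i : ℕ) (D : Set (Q × ℕ)) (j : ℕ) : Prop :=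
  i < j ∨ (i = j ∧ profLT A w C D)

/-- `C` (on level `i`) is `first(m)` for the labeling `gl`: the first class
(in the `before` order) labeled `m`. -/
def IsFirst (gl : Set (Q × ℕ) → ℕ) (m : ℕ) (C : Set (Q × ℕ)) (i : ℕ) : Prop :=
  ClassAt A w C i ∧ gl C = m ∧
    ∀ D j, ClassAt A w D j → gl D = m → ¬ BeforeC A w D j C i

/-- `C` is a descendant of `first(m)` (for the labeling `gl`). -/
def DescFirst (gl : Set (Q × ℕ) → ℕ) (m : ℕ) (C : Set (Q × ℕ)) : Prop :=
  ∃ Fm j, IsFirst A w gl m Fm j ∧ DescC A w Fm C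

/-- `C = lmd(m, i)` for the labeling `gl`: `C` is the class of lexicographically
minimal profile among the descendants of `first(m)` on level `i`. -/
def IsLmd (gl : Set (Q × ℕ) → ℕ) (m i : ℕ) (C : Set (Q × ℕ)) : Prop :=
  ClassAt A w C i ∧ DescFirst A w gl m C ∧
    ∀ D, ClassAt A w D i → DescFirst A w gl m D → profLE A w C D

/-- `gl` is the global labeling of the profile tree `T`:
`gl(U₀) = 0` for the level-0 class; for every class `U` on level `i`,
if `labels(U) = {m ∣ U = lmd(m,i)}` is nonempty then `gl(U) = min(labels(U))`,
and otherwise `gl(U) = 1 + max{gl(W) ∣ W before U}`. -/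
def GlSpec (gl : Set (Q × ℕ) → ℕ) : Prop :=
  (∀ C, ClassAt A w C 0 → gl C = 0) ∧
  ∀ C i, ClassAt A w C i →
    ((∃ m, IsLmd A w gl m i C) →
        IsLmd A w gl (gl C) i C ∧ ∀ m, IsLmd A w gl m i C → gl C ≤ m) ∧
    ((¬ ∃ m, IsLmd A w gl m i C) →
        (∃ D j, ClassAt A w D j ∧ BeforeC A w D j C i ∧ gl C = gl D + 1) ∧
        ∀ D j, ClassAt A w D j → BeforeC A w D j C i → gl D < gl C)

/-- The label `m` is successful on level `i`: there are classes `U` on level `i-1`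
and `U'` on level `i` with `gl(U) = gl(U') = m` such that either `U'` is the
`F`-child of `U`, or `U'` is not a child of `U` at all. -/
def SuccessfulAt (gl : Set (Q × ℕ) → ℕ) (m i : ℕ) : Prop :=
  0 < i ∧ ∃ U U', ClassAt A w U (i - 1) ∧ ClassAt A w U' i ∧ gl U = m ∧ gl U' = m ∧
    ((childC A w U U' ∧ IsFClass A U') ∨ ¬ childC A w U U')

/-!
Classes of `T` are determined by their profiles, and `T` is the prefix tree of the profiles that
occur: a child extends the profile of its parent by one bit, which is `1` exactly for `F`-classes.
Every class `U` on level `i` is `lmd(gl U, i)`, so labels are unique on each level and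
`lmd(m, i + 1)` is the least child of `lmd(m, i)` whenever that class has children.

If `m` is successful infinitely often, follow the leftmost live branch below `first(m)`. Were it
eventually free of `F`-classes, a lexicographically smaller descendant of `first(m)` on a late
level would branch off to the left of an early `F`-class of the branch, into a subtree that has
died out by then; so the branch would eventually be `lmd(m, ·)`, and a late success of `m` would
put an `F`-class on it.

Conversely, if every label is successful only finitely often, then by strong induction on `m`
every label present on infinitely many levels eventually moves along edges of `T` into
non-`F`-classes. Since the number of live classes per level is bounded by `|Q|`, an infinite
branch eventually has no live side branches; this forces some label to sit on the branch
infinitely often, and that label then follows the branch, which is therefore not accepting.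
-/

namespace List

variable {α : Type*} [LinearOrder α]

theorem append_singleton_lt_append_singleton {L M : List α} (hlen : L.length = M.length)
    (h : L < M) (a b : α) : L ++ [a] < M ++ [b] := by
  induction h with
  | nil => simp at hlen
  | rel hr => exact Lex.rel hr
  | cons _ ih => exact Lex.cons (ih (by simpa using hlen))

theorem append_singleton_le_append_singleton {L M : List α} (hlen : L.length = M.length)
    (h : L ≤ M) (a : α) : L ++ [a] ≤ M ++ [a] := by
  rcases h.lt_or_eq with h | rfl
  · exact (append_singleton_lt_append_singleton hlen h a a).le
  · exact le_rfl

theorem le_of_append_singleton_le_append_singleton {L M : List α}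
    (hlen : L.length = M.length) {a b : α} (h : L ++ [a] ≤ M ++ [b]) : L ≤ M :=
  le_of_not_gt fun hlt => h.not_gt (append_singleton_lt_append_singleton hlen.symm hlt b a)

theorem exists_take_succ_of_lt {L M : List α} (h : L < M) (hlen : L.length = M.length) :
    ∃ d P a c, d < L.length ∧ L.take (d + 1) = P ++ [a] ∧ M.take (d + 1) = P ++ [c] ∧
      a < c := by
  induction h with
  | nil => simp at hlen
  | @rel a _ c _ hac => exact ⟨0, [], a, c, by simp, by simp, by simp, hac⟩
  | @cons x _ _ _ ih =>
      obtain ⟨d, P, a, c, hd, hL, hM, hac⟩ := ih (by simpa using hlen)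
      exact ⟨d + 1, x :: P, a, c, by simpa using hd, by simp [hL], by simp [hM], hac⟩

end List

theorem Filter.Eventually.exists_mem_frequently {ι α : Type*} {l : Filter α} [l.NeBot]
    {S : Set ι} {p : ι → α → Prop} (h : ∀ᶠ x in l, ∃ i ∈ S, p i x) (hS : S.Finite) :
    ∃ i ∈ S, ∃ᶠ x in l, p i x := by
  by_contra! hne
  obtain ⟨x, ⟨i, hi, hpi⟩, hx⟩ := (h.and (hS.eventually_all.mpr hne)).exists
  exact hx i hi hpi

open Classical in
noncomputable def visitBit (q : Q) : ℕ := if q ∈ A.F then 1 else 0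

variable {A w}

theorem lexLE_iff_le {L M : List ℕ} : lexLE L M ↔ L ≤ M := (le_iff_lt_or_eq (a := L)).symm

section NodeProfiles

theorem length_of_mem_runProfiles {v : Q × ℕ} {L : List ℕ} (h : L ∈ runProfiles A w v) :
    L.length = v.2 + 1 := by
  obtain ⟨p, -, -, -, rfl⟩ := h
  simp

theorem getLast?_of_mem_runProfiles {v : Q × ℕ} {L : List ℕ} (h : L ∈ runProfiles A w v) :
    L.getLast? = some (visitBit A v.1) := by
  obtain ⟨p, -, -, hp, rfl⟩ := h
  simp [List.getLast?_range, visitBit]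
  rw [hp]

theorem eq_zero_or_eq_one_of_mem_runProfiles {v : Q × ℕ} {L : List ℕ}
    (h : L ∈ runProfiles A w v) {x : ℕ} (hx : x ∈ L) : x = 0 ∨ x = 1 := by
  obtain ⟨p, -, -, -, rfl⟩ := h
  obtain ⟨j, -, rfl⟩ := List.mem_map.mp hx
  split_ifs <;> simp

theorem runProfiles_finite (v : Q × ℕ) : (runProfiles A w v).Finite := by
  classical
  refine (Set.finite_range fun b : Fin (v.2 + 1) → Bool =>
    (List.range (v.2 + 1)).map fun j =>
      if h : j < v.2 + 1 then cond (b ⟨j, h⟩) 1 0 else 0).subset ?_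
  rintro L ⟨p, -, -, -, rfl⟩
  refine ⟨fun k => decide (p k ∈ A.F), List.map_congr_left fun j hj => ?_⟩
  simp [List.mem_range.mp hj]

theorem mem_runProfiles_succ {q : Q} {i : ℕ} {L : List ℕ} :
    L ∈ runProfiles A w (q, i + 1) ↔
      ∃ p, q ∈ A.ρ p (w i) ∧
        ∃ L' ∈ runProfiles A w (p, i), L = L' ++ [visitBit A q] := by
  classical
  constructor
  · rintro ⟨p, h0, hstep, hend, rfl⟩
    simp only at hend
    refine ⟨p i, hend ▸ hstep i i.lt_succ_self, _,
      ⟨p, h0, fun j hj => hstep j (Nat.lt_succ_of_lt hj), rfl, rfl⟩, ?_⟩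
    rw [List.range_succ (n := i + 1), List.map_append]
    simp [visitBit, hend]
  · rintro ⟨p₀, hρ, L', ⟨p, h0, hstep, hend, rfl⟩, rfl⟩
    refine ⟨Function.update p (i + 1) q, by simpa using h0, fun j hj => ?_, by simp, ?_⟩
    · rcases Nat.lt_succ_iff_lt_or_eq.mp hj with hj | rfl
      · simpa [Function.update_of_ne (show j + 1 ≠ i + 1 by omega),
          Function.update_of_ne (show j ≠ i + 1 by omega)] using hstep j hj
      · simpa [Function.update_of_ne (show j ≠ j + 1 by omega), hend] using hρ
    · rw [List.range_succ (n := i + 1), List.map_append]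
      congr 1
      · refine List.map_congr_left fun j hj => ?_
        rw [Function.update_of_ne (by simp at hj; omega)]
      · simp [visitBit]

theorem isMaxProfile_profile {v : Q × ℕ} (hv : memV A w v) :
    IsMaxProfile A w v (profile A w v) := by
  have h : ∃ L, IsMaxProfile A w v L := by
    obtain ⟨L, hL, hmax⟩ := (runProfiles_finite v).exists_maximalFor id _ hv
    exact ⟨L, hL, fun L' hL' => lexLE_iff_le.mpr
      ((le_total L' L).elim id fun h => hmax hL' h)⟩
  rw [profile, dif_pos h]
  exact h.choose_spec

theorem profile_mem_runProfiles {v : Q × ℕ} (hv : memV A w v) :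
    profile A w v ∈ runProfiles A w v :=
  (isMaxProfile_profile hv).1

theorem le_profile {v : Q × ℕ} {L : List ℕ} (h : L ∈ runProfiles A w v) :
    L ≤ profile A w v :=
  lexLE_iff_le.mp ((isMaxProfile_profile ⟨L, h⟩).2 L h)

theorem length_profile {v : Q × ℕ} (hv : memV A w v) : (profile A w v).length = v.2 + 1 :=
  length_of_mem_runProfiles (profile_mem_runProfiles hv)

theorem edgeG_succ_iff {u : Q × ℕ} {q : Q} {i : ℕ} :
    edgeG A w u (q, i + 1) ↔ memV A w u ∧ u.2 = i ∧ q ∈ A.ρ u.1 (w i) := by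
  constructor
  · rintro ⟨hu, hi, hq⟩
    obtain rfl : i = u.2 := by simpa using hi
    exact ⟨hu, rfl, hq⟩
  · rintro ⟨hu, rfl, hq⟩
    exact ⟨hu, rfl, hq⟩

theorem append_visitBit_mem_runProfiles {u v : Q × ℕ} (h : edgeG A w u v) :
    profile A w u ++ [visitBit A v.1] ∈ runProfiles A w v := by
  obtain ⟨q, j⟩ := v
  obtain ⟨hu, rfl, hq⟩ := h
  exact mem_runProfiles_succ.mpr ⟨u.1, hq, _, profile_mem_runProfiles hu, rfl⟩

variable [Finite Q]

theorem exists_edgeG'_profile_eq {v : Q × ℕ} (hv : memV A w v) {i : ℕ} (hi : v.2 = i + 1) :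
    ∃ u, edgeG' A w u v ∧ profile A w v = profile A w u ++ [visitBit A v.1] := by
  obtain ⟨q, j⟩ := v
  obtain rfl : j = i + 1 := hi
  have hfin : {u | edgeG A w u (q, i + 1)}.Finite :=
    (Set.finite_univ.prod (Set.finite_singleton i)).subset fun u hu =>
      ⟨trivial, (edgeG_succ_iff.mp hu).2.1⟩
  have hne : {u | edgeG A w u (q, i + 1)}.Nonempty := by
    obtain ⟨L, hL⟩ := hv
    obtain ⟨p, hq, L', hL', -⟩ := mem_runProfiles_succ.mp hL
    exact ⟨(p, i), edgeG_succ_iff.mpr ⟨⟨L', hL'⟩, rfl, hq⟩⟩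
  obtain ⟨u, hu, hmax⟩ := hfin.exists_maximalFor (profile A w) _ hne
  have hmax' : ∀ u', edgeG A w u' (q, i + 1) → profile A w u' ≤ profile A w u :=
    fun u' hu' => (le_total _ _).elim id fun h => hmax hu' h
  have hlen : ∀ u', edgeG A w u' (q, i + 1) → (profile A w u').length = i + 1 := by
    intro u' hu'
    rw [length_profile (edgeG_succ_iff.mp hu').1, (edgeG_succ_iff.mp hu').2.1]
  refine ⟨u, ⟨hu, fun u' hu' => lexLE_iff_le.mpr (hmax' u' hu')⟩,
    le_antisymm ?_ (le_profile (append_visitBit_mem_runProfiles hu))⟩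
  obtain ⟨p, hq, L', hL', hprof⟩ := mem_runProfiles_succ.mp (profile_mem_runProfiles hv)
  have hp : edgeG A w (p, i) (q, i + 1) := edgeG_succ_iff.mpr ⟨⟨L', hL'⟩, rfl, hq⟩
  rw [hprof]
  calc L' ++ [visitBit A q] ≤ profile A w (p, i) ++ [visitBit A q] :=
        List.append_singleton_le_append_singleton
          (by rw [length_of_mem_runProfiles hL', hlen _ hp]) (le_profile hL') _
    _ ≤ profile A w u ++ [visitBit A q] :=
        List.append_singleton_le_append_singleton (by rw [hlen _ hp, hlen _ hu]) (hmax' _ hp) _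

theorem edgeG'_iff {u v : Q × ℕ} (hv : memV A w v) {i : ℕ} (hi : v.2 = i + 1) :
    edgeG' A w u v ↔ edgeG A w u v ∧ profile A w v = profile A w u ++ [visitBit A v.1] := by
  obtain ⟨u₀, hu₀, hprof⟩ := exists_edgeG'_profile_eq hv hi
  have hlen : ∀ u', edgeG A w u' v → (profile A w u').length = i + 1 := fun u' hu' => by
    rw [length_profile hu'.1]
    have := hu'.2.1
    omega
  constructor
  · rintro ⟨he, hmax⟩
    refine ⟨he, ?_⟩
    rw [hprof, le_antisymm (lexLE_iff_le.mp (hu₀.2 u he)) (lexLE_iff_le.mp (hmax u₀ hu₀.1))]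
  · rintro ⟨he, hprof'⟩
    refine ⟨he, fun u' hu' => lexLE_iff_le.mpr ?_⟩
    refine List.le_of_append_singleton_le_append_singleton (a := visitBit A v.1)
      (b := visitBit A v.1) (by rw [hlen u' hu', hlen u he]) ?_
    rw [← hprof']
    exact le_profile (append_visitBit_mem_runProfiles hu')

end NodeProfiles

section Classes

variable (A w) in
open Classical in
/-- The profile `h_U` shared by the members of a class `U` (junk for `U = ∅`). -/
noncomputable def classProfile (C : Set (Q × ℕ)) : List ℕ :=
  if h : C.Nonempty then profile A w h.some else []

variable {C D : Set (Q × ℕ)} {i j : ℕ}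

theorem mem_classOf_self {u : Q × ℕ} (hu : memV A w u) : u ∈ classOf A w u :=
  ⟨hu, rfl, rfl⟩

theorem classProfile_classOf {u : Q × ℕ} (hu : memV A w u) :
    classProfile A w (classOf A w u) = profile A w u := by
  have hne : (classOf A w u).Nonempty := ⟨u, mem_classOf_self hu⟩
  rw [classProfile, dif_pos hne]
  exact hne.some_mem.2.2

theorem classAt_classOf {u : Q × ℕ} (hu : memV A w u) : ClassAt A w (classOf A w u) u.2 :=
  ⟨u, hu, rfl, rfl⟩

theorem ClassAt.profile_eq (hC : ClassAt A w C i) {v : Q × ℕ} (hv : v ∈ C) :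
    profile A w v = classProfile A w C := by
  obtain ⟨u, hu, rfl, rfl⟩ := hC
  rw [classProfile_classOf hu, hv.2.2]

theorem ClassAt.memV_of_mem (hC : ClassAt A w C i) {v : Q × ℕ} (hv : v ∈ C) :
    memV A w v ∧ v.2 = i := by
  obtain ⟨u, hu, rfl, rfl⟩ := hC
  exact ⟨hv.1, hv.2.1⟩

theorem ClassAt.nonempty (hC : ClassAt A w C i) : C.Nonempty := by
  obtain ⟨u, hu, rfl, rfl⟩ := hC
  exact ⟨u, mem_classOf_self hu⟩

theorem ClassAt.length_classProfile (hC : ClassAt A w C i) :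
    (classProfile A w C).length = i + 1 := by
  obtain ⟨u, hu, rfl, rfl⟩ := hC
  rw [classProfile_classOf hu, length_profile hu]

theorem ClassAt.level_eq (hC : ClassAt A w C i) (hC' : ClassAt A w C j) : i = j := by
  have := hC.length_classProfile
  have := hC'.length_classProfile
  omega

theorem ClassAt.eq_of_classProfile_eq (hC : ClassAt A w C i) (hD : ClassAt A w D j)
    (h : classProfile A w C = classProfile A w D) : C = D := by
  have hij : i = j := by
    have := hC.length_classProfile
    have := hD.length_classProfile
    rw [h] at *
    omega
  obtain ⟨u, hu, rfl, rfl⟩ := hC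
  obtain ⟨v, hv, rfl, rfl⟩ := hD
  rw [classProfile_classOf hu, classProfile_classOf hv] at h
  ext x
  simp [classOf, hij, h]

theorem ClassAt.profLE_iff (hC : ClassAt A w C i) (hD : ClassAt A w D j) :
    profLE A w C D ↔ classProfile A w C ≤ classProfile A w D := by
  obtain ⟨u, hu⟩ := hC.nonempty
  obtain ⟨v, hv⟩ := hD.nonempty
  refine ⟨fun h => ?_, fun h u' hu' v' hv' => ?_⟩
  · simpa [lexLE_iff_le, hC.profile_eq hu, hD.profile_eq hv] using h u hu v hv
  · rwa [lexLE_iff_le, hC.profile_eq hu', hD.profile_eq hv']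

theorem ClassAt.profLT_iff (hC : ClassAt A w C i) (hD : ClassAt A w D j) :
    profLT A w C D ↔ classProfile A w C < classProfile A w D := by
  obtain ⟨u, hu⟩ := hC.nonempty
  obtain ⟨v, hv⟩ := hD.nonempty
  refine ⟨fun h => ?_, fun h u' hu' v' hv' => ?_⟩
  · simpa [lexLT, hC.profile_eq hu, hD.profile_eq hv] using h u hu v hv
  · rw [lexLT, hC.profile_eq hu', hD.profile_eq hv']
    exact h

theorem ClassAt.isFClass_iff (hC : ClassAt A w C i) :
    IsFClass A C ↔ (classProfile A w C).getLast? = some 1 := by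
  have hlast : ∀ v ∈ C, (classProfile A w C).getLast? = some (visitBit A v.1) := fun v hv => by
    rw [← hC.profile_eq hv]
    exact getLast?_of_mem_runProfiles (profile_mem_runProfiles (hC.memV_of_mem hv).1)
  obtain ⟨u, hu⟩ := hC.nonempty
  refine ⟨fun h => by simp [hlast u hu, visitBit, h u hu], fun h v hv => ?_⟩
  rw [hlast v hv, Option.some_inj, visitBit] at h
  by_contra hF
  simp [hF] at h

theorem ClassAt.eq_zero_or_eq_one_of_mem_classProfile (hC : ClassAt A w C i) {x : ℕ}
    (hx : x ∈ classProfile A w C) : x = 0 ∨ x = 1 := by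
  obtain ⟨u, hu, rfl, rfl⟩ := hC
  rw [classProfile_classOf hu] at hx
  exact eq_zero_or_eq_one_of_mem_runProfiles (profile_mem_runProfiles hu) hx

theorem setOf_classAt_subset_range (i : ℕ) :
    {C | ClassAt A w C i} ⊆ Set.range fun q => classOf A w (q, i) := by
  rintro C ⟨⟨q, _⟩, -, rfl, rfl⟩
  exact ⟨q, rfl⟩

variable [Finite Q]

theorem setOf_classAt_finite (i : ℕ) : {C | ClassAt A w C i}.Finite :=
  (Set.finite_range _).subset (setOf_classAt_subset_range i)

theorem ncard_setOf_classAt_le (i : ℕ) : {C | ClassAt A w C i}.ncard ≤ Nat.card Q :=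
  calc _ ≤ (Set.range fun q => classOf A w (q, i)).ncard :=
        Set.ncard_le_ncard (setOf_classAt_subset_range i) (Set.finite_range _)
    _ ≤ (Set.univ : Set Q).ncard := by
        rw [← Set.image_univ]
        exact Set.ncard_image_le Set.finite_univ
    _ = Nat.card Q := Set.ncard_univ Q

theorem exists_min_classProfile {S : Set (Set (Q × ℕ))}
    (hS : ∀ C ∈ S, ClassAt A w C i) (hne : S.Nonempty) :
    ∃ C ∈ S, ∀ D ∈ S, classProfile A w C ≤ classProfile A w D := by
  obtain ⟨C, hC, hmin⟩ :=
    ((setOf_classAt_finite i).subset hS).exists_minimalFor (classProfile A w) S hne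
  exact ⟨C, hC, fun D hD => (le_total _ _).elim id fun h => hmin hD h⟩

end Classes

section Tree

variable {C D E : Set (Q × ℕ)} {i j : ℕ}

theorem childC.exists_classAt (h : childC A w C D) :
    ∃ i, ClassAt A w C i ∧ ClassAt A w D (i + 1) := by
  obtain ⟨u, v, he, hv, rfl, rfl⟩ := h
  refine ⟨u.2, classAt_classOf he.1.1, ?_⟩
  rw [← he.1.2.1]
  exact classAt_classOf hv

theorem IsBranch.descC {b : ℕ → Set (Q × ℕ)} (hb : IsBranch A w b) (hij : i ≤ j) :
    DescC A w (b i) (b j) := by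
  induction j, hij using Nat.le_induction with
  | base => exact .refl
  | succ j _ ih => exact ih.tail (hb.2 j)

variable [Finite Q]

theorem childC_iff (hC : ClassAt A w C i) (hD : ClassAt A w D j) :
    childC A w C D ↔ ∃ a, classProfile A w D = classProfile A w C ++ [a] := by
  constructor
  · rintro ⟨u, v, he, hv, rfl, rfl⟩
    rw [classProfile_classOf he.1.1, classProfile_classOf hv,
      ((edgeG'_iff hv he.1.2.1).mp he).2]
    exact ⟨_, rfl⟩
  · rintro ⟨a, ha⟩
    obtain ⟨v, hv, rfl, rfl⟩ := hD
    have hlen := congrArg List.length ha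
    rw [classProfile_classOf hv, length_profile hv, List.length_append,
      hC.length_classProfile] at hlen
    obtain ⟨u, hu, hprof⟩ := exists_edgeG'_profile_eq hv (i := i) (by simpa using hlen)
    refine ⟨u, v, hu, hv, hC.eq_of_classProfile_eq (classAt_classOf hu.1.1) ?_, rfl⟩
    rw [classProfile_classOf hv, hprof] at ha
    rw [classProfile_classOf hu.1.1, List.append_inj_left' ha rfl]

theorem exists_childC_of_classAt_succ (hD : ClassAt A w D (i + 1)) :
    ∃ C, ClassAt A w C i ∧ childC A w C D := by
  obtain ⟨v, hv, hl, rfl⟩ := hD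
  obtain ⟨u, hu, -⟩ := exists_edgeG'_profile_eq hv hl
  have hlu : u.2 = i := by have := hu.1.2.1; omega
  exact ⟨classOf A w u, hlu ▸ classAt_classOf hu.1.1, u, v, hu, hv, rfl, rfl⟩

theorem DescC.prefix (h : DescC A w C D) :
    classProfile A w C <+: classProfile A w D := by
  induction h with
  | refl => exact List.prefix_refl _
  | tail _ hED ih =>
      obtain ⟨k, hE, hD⟩ := hED.exists_classAt
      obtain ⟨a, ha⟩ := (childC_iff hE hD).mp hED
      exact ha ▸ ih.trans (List.prefix_append _ _)

theorem descC_of_prefix (hC : ClassAt A w C i) (hD : ClassAt A w D j)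
    (h : classProfile A w C <+: classProfile A w D) : DescC A w C D := by
  have hij : i ≤ j := by
    have := h.length_le
    rw [hC.length_classProfile, hD.length_classProfile] at this
    omega
  induction j, hij using Nat.le_induction generalizing D with
  | base =>
      rw [hC.eq_of_classProfile_eq hD (h.eq_of_length (by
        rw [hC.length_classProfile, hD.length_classProfile]))]
      exact .refl
  | succ j hij ih =>
      obtain ⟨P, hP, hPD⟩ := exists_childC_of_classAt_succ hD
      obtain ⟨a, ha⟩ := (childC_iff hP hD).mp hPD
      refine (ih hP (List.prefix_of_prefix_length_le h (ha ▸ List.prefix_append _ _) ?_)).tail hPD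
      rw [hC.length_classProfile, hP.length_classProfile]
      omega

theorem DescC.level_le (h : DescC A w C D) (hC : ClassAt A w C i) (hD : ClassAt A w D j) :
    i ≤ j := by
  have := h.prefix.length_le
  rw [hC.length_classProfile, hD.length_classProfile] at this
  omega

theorem DescC.eq_of_classAt (h : DescC A w C D) (hC : ClassAt A w C i) (hD : ClassAt A w D i) :
    C = D :=
  hC.eq_of_classProfile_eq hD
    (h.prefix.eq_of_length (by rw [hC.length_classProfile, hD.length_classProfile]))

theorem eq_of_descC_of_descC {C' : Set (Q × ℕ)} (hC : ClassAt A w C i) (hC' : ClassAt A w C' i)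
    (h : DescC A w C D) (h' : DescC A w C' D) : C = C' := by
  refine hC.eq_of_classProfile_eq hC' ((List.prefix_of_prefix_length_le h.prefix h'.prefix
    ?_).eq_of_length ?_) <;> rw [hC.length_classProfile, hC'.length_classProfile]

theorem exists_descC_classAt (hD : ClassAt A w D j) (hij : i ≤ j) :
    ∃ C, ClassAt A w C i ∧ DescC A w C D := by
  induction j generalizing D with
  | zero => exact ⟨D, by rwa [Nat.le_zero.mp hij], .refl⟩
  | succ j ih =>
      rcases hij.eq_or_lt with rfl | hlt
      · exact ⟨D, hD, .refl⟩
      obtain ⟨P, hP, hPD⟩ := exists_childC_of_classAt_succ hD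
      obtain ⟨C, hC, hCP⟩ := ih hP (by omega)
      exact ⟨C, hC, hCP.tail hPD⟩

theorem DescC.exists_between (h : DescC A w C D) (hC : ClassAt A w C i) (hD : ClassAt A w D j)
    {k : ℕ} (hik : i ≤ k) (hkj : k ≤ j) :
    ∃ E, ClassAt A w E k ∧ DescC A w C E ∧ DescC A w E D := by
  obtain ⟨E, hE, hED⟩ := exists_descC_classAt hD hkj
  refine ⟨E, hE, descC_of_prefix hC hE ?_, hED⟩
  refine List.prefix_of_prefix_length_le h.prefix hED.prefix ?_
  rw [hC.length_classProfile, hE.length_classProfile]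
  omega

theorem DescC.exists_descC_childC (h : DescC A w C E) (hC : ClassAt A w C i)
    (hE : ClassAt A w E (j + 1)) (hij : i ≤ j) :
    ∃ P, ClassAt A w P j ∧ DescC A w C P ∧ childC A w P E := by
  obtain ⟨P', hP', hCP', hP'E⟩ := h.exists_between hC hE hij j.le_succ
  obtain ⟨P, hP, hPE⟩ := exists_childC_of_classAt_succ hE
  obtain rfl := eq_of_descC_of_descC hP hP' (.single hPE) hP'E
  exact ⟨P, hP, hCP', hPE⟩

end Tree

section Siblings

variable [Finite Q] {P X Y R D E : Set (Q × ℕ)} {j l : ℕ}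

theorem isFClass_of_childC_of_classProfile_lt (hX : childC A w P X) (hY : childC A w P Y)
    (hlt : classProfile A w X < classProfile A w Y) : IsFClass A Y := by
  obtain ⟨i, hP, hXi⟩ := hX.exists_classAt
  obtain ⟨k, hPk, hYk⟩ := hY.exists_classAt
  obtain rfl := hP.level_eq hPk
  obtain ⟨a, ha⟩ := (childC_iff hP hXi).mp hX
  obtain ⟨c, hc⟩ := (childC_iff hP hYk).mp hY
  have hac : a < c := by
    by_contra! hca
    rw [ha, hc] at hlt
    rcases hca.lt_or_eq with hca | rfl
    · exact lt_asymm hlt (List.append_left_lt (List.Lex.rel hca))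
    · exact lt_irrefl _ hlt
  have ha01 := hXi.eq_zero_or_eq_one_of_mem_classProfile (x := a) (by simp [ha])
  have hc01 := hYk.eq_zero_or_eq_one_of_mem_classProfile (x := c) (by simp [hc])
  rw [hYk.isFClass_iff, hc, List.getLast?_concat]
  congr
  omega

theorem exists_childC_childC_of_classProfile_lt (hR : ClassAt A w R l) (hD : ClassAt A w D j)
    (hE : ClassAt A w E j) (hRD : DescC A w R D) (hRE : DescC A w R E)
    (hlt : classProfile A w D < classProfile A w E) :
    ∃ d ≥ l, ∃ P X Y, ClassAt A w P d ∧ childC A w P X ∧ childC A w P Y ∧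
      DescC A w X D ∧ DescC A w Y E ∧ classProfile A w X < classProfile A w Y := by
  obtain ⟨d, L, a, c, hd, hDd, hEd, hac⟩ := List.exists_take_succ_of_lt hlt
    (by rw [hD.length_classProfile, hE.length_classProfile])
  rw [hD.length_classProfile] at hd
  obtain ⟨X, hX, hXD⟩ := exists_descC_classAt hD (show d ≤ j by omega)
  obtain ⟨Y, hY, hYE⟩ := exists_descC_classAt hE (show d ≤ j by omega)
  have hXL : classProfile A w X = L ++ [a] := by
    rw [← hDd, List.prefix_iff_eq_take.mp hXD.prefix, hX.length_classProfile]
  have hYL : classProfile A w Y = L ++ [c] := by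
    rw [← hEd, List.prefix_iff_eq_take.mp hYE.prefix, hY.length_classProfile]
  have hld : l < d := by
    by_contra! hdl
    obtain ⟨Z, hZ, hZR⟩ := exists_descC_classAt hR hdl
    have hXY := congrArg (classProfile A w) <|
      (eq_of_descC_of_descC hX hZ hXD (hZR.trans hRD)).trans
        (eq_of_descC_of_descC hY hZ hYE (hZR.trans hRE)).symm
    rw [hXL, hYL] at hXY
    simp at hXY
    omega
  obtain ⟨d, rfl⟩ : ∃ d', d = d' + 1 := ⟨d - 1, by omega⟩
  obtain ⟨P, hP, hPX⟩ := exists_childC_of_classAt_succ hX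
  obtain ⟨P', hP', hP'Y⟩ := exists_childC_of_classAt_succ hY
  have hparent : ∀ {P Z : Set (Q × ℕ)} {b : ℕ}, ClassAt A w P d → ClassAt A w Z (d + 1) →
      childC A w P Z → classProfile A w Z = L ++ [b] → classProfile A w P = L := by
    intro P Z b hP hZ hPZ hZL
    obtain ⟨b', hb'⟩ := (childC_iff hP hZ).mp hPZ
    exact List.append_inj_left' (hb'.symm.trans hZL) rfl
  obtain rfl : P = P' := hP.eq_of_classProfile_eq hP'
    ((hparent hP hX hPX hXL).trans (hparent hP' hY hP'Y hYL).symm)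
  exact ⟨d, by omega, P, X, Y, hP, hPX, hP'Y, hXD, hYE, by
    rw [hXL, hYL]; exact List.append_left_lt (List.Lex.rel hac)⟩

end Siblings

section Live

variable (A w) in
def LiveAt (C : Set (Q × ℕ)) (i : ℕ) : Prop :=
  ClassAt A w C i ∧ ∀ j, i ≤ j → ∃ D, ClassAt A w D j ∧ DescC A w C D

variable {C D E : Set (Q × ℕ)} {i j : ℕ}

theorem IsBranch.liveAt {b : ℕ → Set (Q × ℕ)} (hb : IsBranch A w b) (i : ℕ) :
    LiveAt A w (b i) i :=
  ⟨hb.1 i, fun j hij => ⟨b j, hb.1 j, hb.descC hij⟩⟩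

theorem DescC.exists_childC_descC (h : DescC A w C E) (hC : ClassAt A w C i)
    (hE : ClassAt A w E j) (hij : i < j) : ∃ D, childC A w C D ∧ DescC A w D E := by
  rcases Relation.ReflTransGen.cases_head h with rfl | ⟨D, hCD, hDE⟩
  · exact absurd (hC.level_eq hE) hij.ne
  · exact ⟨D, hCD, hDE⟩

variable [Finite Q]

theorem LiveAt.of_descC (hD : LiveAt A w D j) (h : DescC A w C D) (hC : ClassAt A w C i) :
    LiveAt A w C i := by
  refine ⟨hC, fun k hik => ?_⟩
  rcases le_total k j with hkj | hjk
  · obtain ⟨E, hE, hCE, -⟩ := h.exists_between hC hD.1 hik hkj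
    exact ⟨E, hE, hCE⟩
  · obtain ⟨E, hE, hDE⟩ := hD.2 k hjk
    exact ⟨E, hE, h.trans hDE⟩

theorem eventually_not_descC_of_not_liveAt (hC : ClassAt A w C i) (h : ¬ LiveAt A w C i) :
    ∀ᶠ j in Filter.atTop, ∀ E, ClassAt A w E j → ¬ DescC A w C E := by
  simp only [LiveAt, hC, true_and, not_forall, not_exists, not_and] at h
  obtain ⟨j₀, hij₀, hdead⟩ := h
  refine Filter.eventually_atTop.mpr ⟨j₀, fun j hj E hE hCE => ?_⟩
  obtain ⟨D, hD, hCD, -⟩ := hCE.exists_between hC hE hij₀ hj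
  exact hdead D hD hCD

theorem eventually_not_descC_of_level_le (N : ℕ) :
    ∀ᶠ j in Filter.atTop, ∀ d ≤ N, ∀ X, ClassAt A w X d → ¬ LiveAt A w X d →
      ∀ E, ClassAt A w E j → ¬ DescC A w X E := by
  refine ((Set.finite_Iic N).eventually_all).mpr fun d _ =>
    ((setOf_classAt_finite d).eventually_all).mpr fun X hX => ?_
  by_cases hlive : LiveAt A w X d
  · exact Filter.Eventually.of_forall fun _ h => (h hlive).elim
  · filter_upwards [eventually_not_descC_of_not_liveAt hX hlive] with j hj _ using hj

theorem LiveAt.exists_childC_liveAt (hC : LiveAt A w C i) :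
    ∃ D, childC A w C D ∧ LiveAt A w D (i + 1) := by
  by_contra! hdead
  have hchildren : {D | childC A w C D}.Finite :=
    (setOf_classAt_finite (i + 1)).subset fun D hD => by
      obtain ⟨k, hk, hD⟩ := hD.exists_classAt
      rwa [hC.1.level_eq hk]
  have hev : ∀ᶠ j in Filter.atTop, ∀ D ∈ {D | childC A w C D},
      ∀ E, ClassAt A w E j → ¬ DescC A w D E := by
    refine hchildren.eventually_all.mpr fun D hCD => ?_
    obtain ⟨k, hk, hD⟩ := hCD.exists_classAt
    rw [← hC.1.level_eq hk] at hD
    exact eventually_not_descC_of_not_liveAt hD (hdead D hCD)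
  obtain ⟨j, hj, hij⟩ := (hev.and (Filter.eventually_gt_atTop i)).exists
  obtain ⟨E, hE, hCE⟩ := hC.2 j hij.le
  obtain ⟨D, hCD, hDE⟩ := hCE.exists_childC_descC hC.1 hE hij
  exact hj D hCD E hE hDE

theorem LiveAt.exists_least_live_childC (hC : LiveAt A w C i) :
    ∃ D, childC A w C D ∧ LiveAt A w D (i + 1) ∧
      ∀ D', childC A w C D' → LiveAt A w D' (i + 1) →
        classProfile A w D ≤ classProfile A w D' := by
  obtain ⟨D₀, h₀⟩ := hC.exists_childC_liveAt
  obtain ⟨D, hD, hmin⟩ := exists_min_classProfile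
    (S := {D | childC A w C D ∧ LiveAt A w D (i + 1)}) (fun _ hX => hX.2.1) ⟨D₀, h₀⟩
  exact ⟨D, hD.1, hD.2, fun D' h₁ h₂ => hmin D' ⟨h₁, h₂⟩⟩

theorem exists_isBranch_of_chain {c : ℕ → Set (Q × ℕ)} {l : ℕ}
    (hc : ∀ j ≥ l, ClassAt A w (c j) j ∧ childC A w (c j) (c (j + 1))) :
    ∃ b, IsBranch A w b ∧ ∀ j ≥ l, b j = c j := by
  classical
  have hanc : ∀ j, ∃ C, j ≤ l → ClassAt A w C j ∧ DescC A w C (c l) := fun j => by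
    by_cases hj : j ≤ l
    · obtain ⟨C, hC⟩ := exists_descC_classAt (hc l le_rfl).1 hj
      exact ⟨C, fun _ => hC⟩
    · exact ⟨∅, fun h => absurd h hj⟩
  choose anc hanc using hanc
  set b : ℕ → Set (Q × ℕ) := fun j => if j < l then anc j else c j with hb
  have hbelow : ∀ j ≤ l, ClassAt A w (b j) j ∧ DescC A w (b j) (c l) := fun j hj => by
    by_cases hjl : j < l
    · simpa [hb, hjl] using hanc j hj
    · obtain rfl : j = l := by omega
      simpa [hb] using ⟨(hc j le_rfl).1, Relation.ReflTransGen.refl⟩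
  refine ⟨b, ⟨fun j => ?_, fun j => ?_⟩, fun j hj => by simp [hb, not_lt.mpr hj]⟩
  · by_cases hj : j ≤ l
    · exact (hbelow j hj).1
    · simpa [hb, show ¬ j < l by omega] using (hc j (by omega)).1
  · by_cases hj : j < l
    · obtain ⟨P, hP, hPb⟩ := exists_childC_of_classAt_succ (hbelow (j + 1) hj).1
      rwa [eq_of_descC_of_descC hP (hbelow j hj.le).1
        ((Relation.ReflTransGen.single hPb).trans (hbelow (j + 1) hj).2) (hbelow j hj.le).2] at hPb
    · simpa [hb, hj, show ¬ j + 1 < l by omega] using (hc j (by omega)).2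

theorem exists_leftmost_live_branch {R : Set (Q × ℕ)} {l : ℕ} (hR : LiveAt A w R l) :
    ∃ b, IsBranch A w b ∧ b l = R ∧ ∀ j ≥ l, ∀ D, childC A w (b j) D →
      LiveAt A w D (j + 1) → classProfile A w (b (j + 1)) ≤ classProfile A w D := by
  classical
  have hnext : ∀ (j : ℕ) (C : Set (Q × ℕ)), ∃ D, LiveAt A w C j → childC A w C D ∧
      LiveAt A w D (j + 1) ∧ ∀ D', childC A w C D' → LiveAt A w D' (j + 1) →
        classProfile A w D ≤ classProfile A w D' := fun j C => by
    by_cases hC : LiveAt A w C j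
    · obtain ⟨D, hD⟩ := hC.exists_least_live_childC
      exact ⟨D, fun _ => hD⟩
    · exact ⟨∅, fun h => absurd h hC⟩
  choose next hnext using hnext
  let c : ℕ → Set (Q × ℕ) := fun j =>
    Nat.rec R (fun k C => if l ≤ k then next k C else R) j
  have hcl : c l = R := by
    suffices ∀ j ≤ l, c j = R from this l le_rfl
    intro j hj
    induction j with
    | zero => rfl
    | succ j ih => simp only [c, if_neg (show ¬ l ≤ j by omega)]
  have hcsucc : ∀ j ≥ l, c (j + 1) = next j (c j) := fun j hj => if_pos hj
  have hlive : ∀ j ≥ l, LiveAt A w (c j) j := by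
    intro j hj
    induction j, hj using Nat.le_induction with
    | base => rwa [hcl]
    | succ j hj ih => exact hcsucc j hj ▸ (hnext j _ ih).2.1
  obtain ⟨b, hb, hbc⟩ := exists_isBranch_of_chain (l := l) fun j hj =>
    ⟨(hlive j hj).1, hcsucc j hj ▸ (hnext j _ (hlive j hj)).1⟩
  refine ⟨b, hb, (hbc l le_rfl).trans hcl, fun j hj D hD hDlive => ?_⟩
  rw [hbc (j + 1) (by omega), hcsucc j hj]
  rw [hbc j hj] at hD
  exact (hnext j _ (hlive j hj)).2.2 D hD hDlive

end Live

section Isolation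

variable [Finite Q] {C D D' : Set (Q × ℕ)} {i : ℕ}

theorem setOf_liveAt_finite (i : ℕ) : {C | LiveAt A w C i}.Finite :=
  (setOf_classAt_finite i).subset fun _ hC => hC.1

theorem exists_injOn_live_childC (i : ℕ) :
    ∃ f : Set (Q × ℕ) → Set (Q × ℕ),
      (∀ C, LiveAt A w C i → childC A w C (f C) ∧ LiveAt A w (f C) (i + 1)) ∧
        Set.InjOn f {C | LiveAt A w C i} := by
  have hchild : ∀ C, ∃ D, LiveAt A w C i → childC A w C D ∧ LiveAt A w D (i + 1) := by
    intro C
    by_cases hC : LiveAt A w C i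
    · obtain ⟨D, hD⟩ := hC.exists_childC_liveAt
      exact ⟨D, fun _ => hD⟩
    · exact ⟨∅, fun h => absurd h hC⟩
  choose f hf using hchild
  refine ⟨f, hf, fun C hC C' hC' h => eq_of_descC_of_descC hC.1 hC'.1
    (.single (hf C hC).1) (h ▸ .single (hf C' hC').1)⟩

theorem ncard_liveAt_le_succ (i : ℕ) :
    {C | LiveAt A w C i}.ncard ≤ {D | LiveAt A w D (i + 1)}.ncard := by
  obtain ⟨f, hf, hinj⟩ := exists_injOn_live_childC (A := A) (w := w) i
  exact Set.ncard_le_ncard_of_injOn f (fun C hC => (hf C hC).2) hinj (setOf_liveAt_finite _)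

theorem eq_of_live_childC_of_ncard_eq
    (hcard : {C | LiveAt A w C i}.ncard = {D | LiveAt A w D (i + 1)}.ncard)
    (hD : childC A w C D) (hD' : childC A w C D')
    (hDl : LiveAt A w D (i + 1)) (hD'l : LiveAt A w D' (i + 1)) : D = D' := by
  obtain ⟨f, hf, hinj⟩ := exists_injOn_live_childC (A := A) (w := w) i
  have himage : f '' {C | LiveAt A w C i} = {D | LiveAt A w D (i + 1)} :=
    Set.eq_of_subset_of_ncard_le (Set.image_subset_iff.mpr fun C hC => (hf C hC).2)
      (by rw [hinj.ncard_image, hcard]) (setOf_liveAt_finite _)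
  have hparent : ∀ {E}, childC A w C E → LiveAt A w E (i + 1) → E = f C := by
    intro E hCE hEl
    obtain ⟨P, hP, rfl⟩ : E ∈ f '' {C | LiveAt A w C i} := by rw [himage]; exact hEl
    obtain ⟨k, hCk, hEk⟩ := hCE.exists_classAt
    obtain rfl : k = i := by have := hEl.1.level_eq hEk; omega
    rw [eq_of_descC_of_descC hCk hP.1 (.single hCE) (.single (hf P hP).1)]
  exact (hparent hD hDl).trans (hparent hD' hD'l).symm

/-- The number of live classes per level is nondecreasing and at most `|Q|`, hence eventually
constant; from then on no live class has two live children. -/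
theorem eventually_eq_of_live_childC :
    ∃ N, ∀ j ≥ N, ∀ C D D', childC A w C D → childC A w C D' →
      LiveAt A w D (j + 1) → LiveAt A w D' (j + 1) → D = D' := by
  set n : ℕ → ℕ := fun i => {C | LiveAt A w C i}.ncard
  have hmono : Monotone n := monotone_nat_of_le_succ ncard_liveAt_le_succ
  have hbdd : ∀ i, n i ≤ Nat.card Q := fun i =>
    (Set.ncard_le_ncard (fun _ hC => hC.1) (setOf_classAt_finite i)).trans
      (ncard_setOf_classAt_le i)
  obtain ⟨_, ⟨N, rfl⟩, hmax⟩ := Set.exists_max_image (Set.range n) id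
    ((Set.finite_Iic (Nat.card Q)).subset (Set.range_subset_iff.mpr hbdd)) (Set.range_nonempty n)
  refine ⟨N, fun j hj C D D' hD hD' hDl hD'l =>
    eq_of_live_childC_of_ncard_eq ?_ hD hD' hDl hD'l⟩
  exact le_antisymm (hmono j.le_succ)
    ((hmax _ ⟨j + 1, rfl⟩).trans (hmono hj))

theorem IsBranch.eventually_eq_of_liveAt_descC {b : ℕ → Set (Q × ℕ)} (hb : IsBranch A w b) :
    ∃ ℓ₀, ∀ ℓ ≥ ℓ₀, ∀ j ≥ ℓ, ∀ D, LiveAt A w D j → DescC A w (b ℓ) D →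
      D = b j := by
  obtain ⟨N, hN⟩ := eventually_eq_of_live_childC (A := A) (w := w)
  refine ⟨N, fun ℓ hℓ j hj => ?_⟩
  induction j, hj using Nat.le_induction with
  | base => exact fun D hD h => (h.eq_of_classAt (hb.1 ℓ) hD.1).symm
  | succ j hj ih =>
      intro D hD h
      obtain ⟨P, hP, hbP, hPD⟩ := h.exists_descC_childC (hb.1 ℓ) hD.1 hj
      obtain rfl : P = b j := ih P (hD.of_descC (.single hPD) hP) hbP
      exact hN j (by omega) _ _ _ hPD (hb.2 j) hD (hb.liveAt _)

end Isolation

section Labels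

variable {gl : Set (Q × ℕ) → ℕ} {C D F : Set (Q × ℕ)} {m i j l : ℕ}

variable (A w) in
def OccursAt (gl : Set (Q × ℕ) → ℕ) (m j : ℕ) : Prop := ∃ C, ClassAt A w C j ∧ gl C = m

variable (A w) in
def IsLeastChild (C D : Set (Q × ℕ)) : Prop :=
  childC A w C D ∧ ∀ D', childC A w C D' → classProfile A w D ≤ classProfile A w D'

theorem beforeC_trichotomy (hC : ClassAt A w C i) (hD : ClassAt A w D j) :
    (C = D ∧ i = j) ∨ BeforeC A w C i D j ∨ BeforeC A w D j C i := by
  rcases lt_trichotomy i j with h | rfl | h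
  · exact .inr (.inl (.inl h))
  · rcases lt_trichotomy (classProfile A w C) (classProfile A w D) with h | h | h
    · exact .inr (.inl (.inr ⟨rfl, (hC.profLT_iff hD).mpr h⟩))
    · exact .inl ⟨hC.eq_of_classProfile_eq hD h, rfl⟩
    · exact .inr (.inr (.inr ⟨rfl, (hD.profLT_iff hC).mpr h⟩))
  · exact .inr (.inr (.inl h))

theorem IsFirst.unique {F' : Set (Q × ℕ)} {l' : ℕ} (h : IsFirst A w gl m F l)
    (h' : IsFirst A w gl m F' l') : F = F' := by
  rcases beforeC_trichotomy h.1 h'.1 with ⟨he, -⟩ | hb | hb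
  · exact he
  · exact absurd hb (h'.2.2 F l h.1 h.2.1)
  · exact absurd hb (h.2.2 F' l' h'.1 h'.2.1)

theorem isLmd_of_isFirst (hF : IsFirst A w gl m F l) (hC : ClassAt A w C i)
    (hFC : DescC A w F C)
    (hmin : ∀ D, ClassAt A w D i → DescC A w F D →
      classProfile A w C ≤ classProfile A w D) :
    IsLmd A w gl m i C := by
  refine ⟨hC, ⟨F, l, hF, hFC⟩, fun D hD ⟨F', l', hF', hF'D⟩ => ?_⟩
  rw [hC.profLE_iff hD]
  exact hmin D hD (hF.unique hF' ▸ hF'D)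

theorem IsLmd.descC (hC : IsLmd A w gl m i C) (hF : IsFirst A w gl m F l) : DescC A w F C := by
  obtain ⟨-, ⟨F', l', hF', hF'C⟩, -⟩ := hC
  rwa [hF.unique hF']

theorem IsLmd.classProfile_le (hC : IsLmd A w gl m i C) (hF : IsFirst A w gl m F l)
    (hD : ClassAt A w D i) (hFD : DescC A w F D) : classProfile A w C ≤ classProfile A w D :=
  (hC.1.profLE_iff hD).mp (hC.2.2 D hD ⟨F, l, hF, hFD⟩)

theorem IsLmd.unique {C' : Set (Q × ℕ)} (h : IsLmd A w gl m i C) (h' : IsLmd A w gl m i C') :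
    C = C' :=
  h.1.eq_of_classProfile_eq h'.1 (le_antisymm ((h.1.profLE_iff h'.1).mp (h.2.2 C' h'.1 h'.2.1))
    ((h'.1.profLE_iff h.1).mp (h'.2.2 C h.1 h.2.1)))

theorem gl_le_of_isLmd (hgl : GlSpec A w gl) (h : IsLmd A w gl m i C) : gl C ≤ m :=
  ((hgl.2 C i h.1).1 ⟨m, h⟩).2 m h

variable [Finite Q]

theorem IsLmd.exists_isFirst (h : IsLmd A w gl m i C) :
    ∃ F l, IsFirst A w gl m F l ∧ l ≤ i := by
  obtain ⟨hC, ⟨F, l, hF, hFC⟩, -⟩ := h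
  exact ⟨F, l, hF, hFC.level_le hF.1 hC⟩

theorem exists_isFirst (h : ∃ j, OccursAt A w gl m j) : ∃ F l, IsFirst A w gl m F l := by
  classical
  let l := Nat.find h
  obtain ⟨C₀, hC₀, hgl₀⟩ := Nat.find_spec h
  obtain ⟨F, ⟨hF, hglF⟩, hmin⟩ := exists_min_classProfile
    (S := {C | ClassAt A w C l ∧ gl C = m}) (fun _ hC => hC.1) ⟨C₀, hC₀, hgl₀⟩
  refine ⟨F, l, hF, hglF, ?_⟩
  rintro D j hD hglD (hlt | ⟨rfl, hlt⟩)
  · exact Nat.find_min h hlt ⟨D, hD, hglD⟩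
  · exact ((hD.profLT_iff hF).mp hlt).not_ge (hmin D ⟨hD, hglD⟩)

theorem exists_isLmd (hF : IsFirst A w gl m F l) (hD : ClassAt A w D i) (hFD : DescC A w F D) :
    ∃ C, IsLmd A w gl m i C := by
  obtain ⟨C, hC, hmin⟩ := exists_min_classProfile
    (S := {D | ClassAt A w D i ∧ DescC A w F D}) (fun _ hX => hX.1) ⟨D, hD, hFD⟩
  exact ⟨C, isLmd_of_isFirst hF hC.1 hC.2 fun D h₁ h₂ => hmin D ⟨h₁, h₂⟩⟩

theorem exists_isLeastChild (h : childC A w C D) : ∃ L, IsLeastChild A w C L := by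
  obtain ⟨i, hC, -⟩ := h.exists_classAt
  obtain ⟨L, hL, hmin⟩ := exists_min_classProfile (S := {D | childC A w C D}) (i := i + 1)
    (fun D' hD' => by
      obtain ⟨k, hk, hD'k⟩ := hD'.exists_classAt
      rwa [hC.level_eq hk]) ⟨D, h⟩
  exact ⟨L, hL, hmin⟩

theorem IsLmd.succ_of_isLeastChild (hC : IsLmd A w gl m i C) (hD : IsLeastChild A w C D) :
    IsLmd A w gl m (i + 1) D := by
  obtain ⟨F, l, hF, hli⟩ := hC.exists_isFirst
  obtain ⟨k, hCk, hDk⟩ := hD.1.exists_classAt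
  obtain rfl : k = i := hCk.level_eq hC.1
  refine isLmd_of_isFirst hF hDk ((hC.descC hF).tail hD.1) fun E hE hFE => ?_
  obtain ⟨P, hP, hFP, hPE⟩ := hFE.exists_descC_childC hF.1 hE hli
  rcases (hC.classProfile_le hF hP hFP).lt_or_eq with hlt | heq
  · obtain ⟨a, ha⟩ := (childC_iff hCk hDk).mp hD.1
    obtain ⟨c, hc⟩ := (childC_iff hP hE).mp hPE
    rw [ha, hc]
    exact (List.append_singleton_lt_append_singleton
      (by rw [hCk.length_classProfile, hP.length_classProfile]) hlt a c).le
  · rw [hCk.eq_of_classProfile_eq hP heq] at hD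
    exact hD.2 E hPE

theorem IsLmd.isLeastChild (hC : IsLmd A w gl m i C) (hD : IsLmd A w gl m (i + 1) D)
    (hCD : childC A w C D) : IsLeastChild A w C D := by
  obtain ⟨L, hL⟩ := exists_isLeastChild hCD
  rwa [(hC.succ_of_isLeastChild hL).unique hD] at hL

/-- The case `labels(U) = ∅` of the labeling never occurs: `U` would then be `first(gl U)`, hence
`lmd(gl U, i)`. -/
theorem isLmd_gl (hgl : GlSpec A w gl) (hC : ClassAt A w C i) : IsLmd A w gl (gl C) i C := by
  by_cases hex : ∃ m, IsLmd A w gl m i C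
  · exact ((hgl.2 C i hC).1 hex).1
  obtain ⟨F, l, hF⟩ := exists_isFirst (gl := gl) ⟨i, C, hC, rfl⟩
  rcases beforeC_trichotomy hF.1 hC with ⟨rfl, rfl⟩ | hb | hb
  · refine absurd ⟨gl F, isLmd_of_isFirst hF hC .refl fun D hD hFD => ?_⟩ hex
    rw [hFD.eq_of_classAt hC hD]
  · exact absurd hF.2.1 (((hgl.2 C i hC).2 hex).2 F l hF.1 hb).ne
  · exact absurd hb (hF.2.2 C i hC rfl)

theorem isLmd_of_gl_eq (hgl : GlSpec A w gl) (hC : ClassAt A w C i) (h : gl C = m) :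
    IsLmd A w gl m i C :=
  h ▸ isLmd_gl hgl hC

theorem eq_of_gl_eq (hgl : GlSpec A w gl) (hC : ClassAt A w C i) (hD : ClassAt A w D i)
    (h : gl C = gl D) : C = D :=
  (isLmd_gl hgl hC).unique (isLmd_of_gl_eq hgl hD h.symm)

theorem gl_le_of_isLeastChild (hgl : GlSpec A w gl) (hC : ClassAt A w C i)
    (h : IsLeastChild A w C D) : gl D ≤ gl C :=
  gl_le_of_isLmd hgl ((isLmd_gl hgl hC).succ_of_isLeastChild h)

end Labels

section Backward

open Filter

variable [Finite Q] {gl : Set (Q × ℕ) → ℕ} {m l : ℕ} {F : Set (Q × ℕ)}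
  {b : ℕ → Set (Q × ℕ)}

theorem IsFirst.liveAt (hgl : GlSpec A w gl) (hF : IsFirst A w gl m F l)
    (hm : ∃ᶠ j in atTop, OccursAt A w gl m j) : LiveAt A w F l := by
  refine ⟨hF.1, fun j hlj => ?_⟩
  obtain ⟨k, hjk, C, hC, hgC⟩ := frequently_atTop.mp hm j
  obtain ⟨D, hD, hFD, -⟩ :=
    ((isLmd_of_gl_eq hgl hC hgC).descC hF).exists_between hF.1 hC hlj hjk
  exact ⟨D, hD, hFD⟩

/-- If the leftmost live branch below `b l` eventually avoids `F`-classes, it is eventually the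
lexicographically least branch below `b l`: a smaller descendant would branch off to the left at
a level where `b` visits an `F`-class, hence early, and into a dead subtree. -/
theorem eventually_classProfile_le_of_leftmost (hb : IsBranch A w b)
    (hleft : ∀ j ≥ l, ∀ D, childC A w (b j) D → LiveAt A w D (j + 1) →
      classProfile A w (b (j + 1)) ≤ classProfile A w D)
    {n₀ : ℕ} (hnF : ∀ i ≥ n₀, ¬ IsFClass A (b i)) :
    ∀ᶠ j in atTop, ∀ D, ClassAt A w D j → DescC A w (b l) D →
      classProfile A w (b j) ≤ classProfile A w D := by
  filter_upwards [eventually_not_descC_of_level_le (A := A) (w := w) (n₀ + l),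
    eventually_ge_atTop l] with j hdead hlj D hD hbD
  by_contra! hlt
  obtain ⟨d, hld, P, X, Y, hP, hPX, hPY, hXD, hYb, hXY⟩ :=
    exists_childC_childC_of_classProfile_lt (hb.1 l) hD (hb.1 j) hbD (hb.descC hlj) hlt
  obtain ⟨k, hPk, hY⟩ := hPY.exists_classAt
  obtain ⟨k', hPk', hX⟩ := hPX.exists_classAt
  obtain rfl := hP.level_eq hPk
  obtain rfl := hP.level_eq hPk'
  obtain rfl : Y = b (d + 1) :=
    eq_of_descC_of_descC hY (hb.1 _) hYb (hb.descC (hYb.level_le hY (hb.1 j)))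
  obtain rfl : P = b d := eq_of_descC_of_descC hP (hb.1 d) (.single hPY) (.single (hb.2 d))
  have hdn₀ : d + 1 < n₀ := by
    by_contra! h
    exact hnF _ h (isFClass_of_childC_of_classProfile_lt hPX hPY hXY)
  exact hdead (d + 1) (by omega) X hX (fun hXl => (hleft d hld X hPX hXl).not_gt hXY) D hD hXD

theorem treeAccepting_of_frequently_successfulAt (hgl : GlSpec A w gl)
    (hm : ∃ᶠ i in atTop, SuccessfulAt A w gl m i) : TreeAccepting A w := by
  by_contra hT
  have hocc : ∃ᶠ j in atTop, OccursAt A w gl m j :=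
    hm.mono fun _ ⟨_, _, U', _, hU', _, hgU', _⟩ => ⟨U', hU', hgU'⟩
  obtain ⟨F, l, hF⟩ := exists_isFirst hocc.exists
  obtain ⟨b, hb, rfl, hleft⟩ := exists_leftmost_live_branch (hF.liveAt hgl hocc)
  obtain ⟨n₀, hn₀⟩ : ∃ n₀, ∀ i ≥ n₀, ¬ IsFClass A (b i) := by
    by_contra! h
    exact hT ⟨b, hb, h⟩
  obtain ⟨J, hJ⟩ := eventually_atTop.mp
    ((eventually_classProfile_le_of_leftmost hb hleft hn₀).and (eventually_ge_atTop l))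
  have hlmd : ∀ j ≥ J, IsLmd A w gl m j (b j) := fun j hj =>
    isLmd_of_isFirst hF (hb.1 j) (hb.descC (hJ j hj).2) (hJ j hj).1
  obtain ⟨i, hi, hi0, U, U', hU, hU', hgU, hgU', hsucc⟩ := frequently_atTop.mp hm (J + n₀ + 1)
  obtain rfl : U = b (i - 1) := (isLmd_of_gl_eq hgl hU hgU).unique (hlmd _ (by omega))
  obtain rfl : U' = b i := (isLmd_of_gl_eq hgl hU' hgU').unique (hlmd _ (by omega))
  rcases hsucc with ⟨-, hF'⟩ | hnc
  · exact hn₀ i (by omega) hF'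
  · exact hnc (by simpa [Nat.sub_add_cancel hi0] using hb.2 (i - 1))

end Backward

section Forward

open Filter

variable {gl : Set (Q × ℕ) → ℕ} {m u v i j J : ℕ} {C D E : Set (Q × ℕ)}

variable (A w) in
/-- As labels are unique on each level, this says that `m` is present on levels `j` and `j + 1`
but not successful on level `j + 1`. -/
def QuietAt (gl : Set (Q × ℕ) → ℕ) (m j : ℕ) : Prop :=
  ∃ C D, ClassAt A w C j ∧ childC A w C D ∧ gl C = m ∧ gl D = m ∧ ¬ IsFClass A D

variable [Finite Q]

theorem QuietAt.gl_eq_of_childC (hgl : GlSpec A w gl) (hq : QuietAt A w gl u j)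
    (hC : ClassAt A w C j) (hCD : childC A w C D) (hD : gl D = u) : gl C = u := by
  obtain ⟨C', D', hC', hC'D', hgC', hgD', -⟩ := hq
  obtain ⟨k, hCk, hDk⟩ := hCD.exists_classAt
  obtain ⟨k', hC'k, hD'k⟩ := hC'D'.exists_classAt
  obtain rfl := hC.level_eq hCk
  obtain rfl := hC'.level_eq hC'k
  obtain rfl : D' = D := eq_of_gl_eq hgl hD'k hDk (hgD'.trans hD.symm)
  rwa [eq_of_descC_of_descC hC hC' (.single hCD) (.single hC'D')]

theorem IsLmd.succ_of_quietAt (hgl : GlSpec A w gl) (hE : IsLmd A w gl m i E)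
    (hq : QuietAt A w gl (gl E) i) : ∃ E', IsLmd A w gl m (i + 1) E' ∧ gl E' = gl E := by
  obtain ⟨C, D, hC, hCD, hgC, hgD, -⟩ := hq
  obtain rfl : C = E := eq_of_gl_eq hgl hC hE.1 hgC
  obtain ⟨k, hCk, hDk⟩ := hCD.exists_classAt
  obtain rfl := hC.level_eq hCk
  refine ⟨D, hE.succ_of_isLeastChild ?_, hgD⟩
  exact (isLmd_gl hgl hC).isLeastChild (isLmd_of_gl_eq hgl hDk hgD) hCD

/-- `lmd(m, ·)` keeps the quiet label `gl E`, while a class labeled `m` would be `lmd(m, ·)`. -/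
theorem not_occursAt_of_isLmd (hgl : GlSpec A w gl) (hE : IsLmd A w gl m i E) (hne : gl E ≠ m)
    (hq : ∀ j ≥ i, OccursAt A w gl (gl E) j → QuietAt A w gl (gl E) j) :
    ∀ j ≥ i, ¬ OccursAt A w gl m j := by
  have hlmd : ∀ j ≥ i, ∃ E', IsLmd A w gl m j E' ∧ gl E' = gl E := by
    intro j hj
    induction j, hj using Nat.le_induction with
    | base => exact ⟨E, hE, rfl⟩
    | succ j hj ih =>
        obtain ⟨E', hE', hgE'⟩ := ih
        obtain ⟨E'', hE'', hgE''⟩ :=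
          hE'.succ_of_quietAt hgl (hgE' ▸ hq j hj ⟨E', hE'.1, hgE'⟩)
        exact ⟨E'', hE'', hgE''.trans hgE'⟩
  rintro j hj ⟨C, hC, hgC⟩
  obtain ⟨E', hE', hgE'⟩ := hlmd j hj
  rw [← hgE', hE'.unique (isLmd_of_gl_eq hgl hC hgC)] at hne
  exact hne hgC

theorem quietAt_of_childC (hgl : GlSpec A w gl) (hC : ClassAt A w C j) (hgC : gl C = m)
    (hCD : childC A w C D) (hsmall : ∀ u < m, OccursAt A w gl u (j + 1) → QuietAt A w gl u j)
    (hns : ¬ SuccessfulAt A w gl m (j + 1)) : QuietAt A w gl m j := by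
  obtain ⟨L, hL⟩ := exists_isLeastChild hCD
  obtain ⟨k, hCk, hLk⟩ := hL.1.exists_classAt
  obtain rfl := hC.level_eq hCk
  have hgL : gl L = m := by
    by_contra hne
    have hlt : gl L < m := (hgC ▸ gl_le_of_isLeastChild hgl hC hL).lt_of_ne hne
    exact hne (((hsmall _ hlt ⟨L, hLk, rfl⟩).gl_eq_of_childC hgl hC hL.1 rfl).symm.trans hgC)
  exact ⟨C, L, hC, hL.1, hgC, hgL, fun hF =>
    hns ⟨j.succ_pos, C, L, by simpa using hC, hLk, hgC, hgL, .inl ⟨hL.1, hF⟩⟩⟩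

theorem exists_childC_of_occursAt (hgl : GlSpec A w gl) (hC : ClassAt A w C j) (hgC : gl C = m)
    (hsmall : ∀ j' > j, ∀ u < m, OccursAt A w gl u j' → QuietAt A w gl u j')
    (hns : ¬ SuccessfulAt A w gl m (j + 1)) {j' : ℕ} (hj' : j < j')
    (hocc : OccursAt A w gl m j') : ∃ D, childC A w C D := by
  by_contra! hnc
  obtain ⟨C', hC', hgC'⟩ := hocc
  obtain ⟨F, l, hF, hl⟩ := (isLmd_of_gl_eq hgl hC hgC).exists_isFirst
  obtain ⟨D', hD', hFD', -⟩ := ((isLmd_of_gl_eq hgl hC' hgC').descC hF).exists_between hF.1 hC'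
    (show l ≤ j + 1 by omega) hj'
  obtain ⟨D, hD⟩ := exists_isLmd hF hD' hFD'
  have hgD : gl D ≠ m := fun h =>
    hns ⟨j.succ_pos, C, D, by simpa using hC, hD.1, hgC, h, .inr (hnc D)⟩
  exact not_occursAt_of_isLmd hgl hD hgD
    (fun j'' hj'' => hsmall j'' (by omega) _ ((gl_le_of_isLmd hgl hD).lt_of_ne hgD)) j' hj'
    ⟨C', hC', hgC'⟩

/-- Stabilization, by strong induction on the label: once the smaller labels are quiet or gone,
a label `m` that is present infinitely often and successful only finitely often is eventually
quiet. -/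
theorem eventually_quietAt (hgl : GlSpec A w gl)
    (hns : ∀ m, ∀ᶠ i in atTop, ¬ SuccessfulAt A w gl m i) (m : ℕ)
    (hm : ∃ᶠ j in atTop, OccursAt A w gl m j) : ∀ᶠ j in atTop, QuietAt A w gl m j := by
  induction m using Nat.strong_induction_on with
  | _ m ih =>
  have hsmall : ∀ᶠ j in atTop, ∀ u ∈ Set.Iio m,
      OccursAt A w gl u j ∨ OccursAt A w gl u (j + 1) → QuietAt A w gl u j := by
    refine (Set.finite_Iio m).eventually_all.mpr fun u hu => ?_
    by_cases hu' : ∃ᶠ j in atTop, OccursAt A w gl u j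
    · exact (ih u hu hu').mono fun j h _ => h
    · rw [not_frequently] at hu'
      filter_upwards [hu', (tendsto_add_atTop_nat 1).eventually hu'] with j h h' hor
      exact (hor.elim h h').elim
  have hstep : ∀ᶠ j in atTop, OccursAt A w gl m j → QuietAt A w gl m j := by
    obtain ⟨J, hJ⟩ := eventually_atTop.mp (hsmall.and (hns m))
    filter_upwards [eventually_ge_atTop J] with j hj ⟨C, hC, hgC⟩
    obtain ⟨j', hj', hocc⟩ := frequently_atTop.mp hm (j + 1)
    obtain ⟨D, hCD⟩ := exists_childC_of_occursAt hgl hC hgC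
      (fun j' hj' u hu h => (hJ j' (by omega)).1 u hu (.inl h)) (hJ (j + 1) (by omega)).2
      (show j < j' by omega) hocc
    exact quietAt_of_childC hgl hC hgC hCD (fun u hu h => (hJ j hj).1 u hu (.inr h))
      (hJ (j + 1) (by omega)).2
  obtain ⟨J, hJ⟩ := eventually_atTop.mp hstep
  obtain ⟨j₀, hj₀, hocc⟩ := frequently_atTop.mp hm J
  have hall : ∀ j ≥ j₀, OccursAt A w gl m j := by
    intro j hj
    induction j, hj using Nat.le_induction with
    | base => exact hocc
    | succ j hj ih =>
        obtain ⟨C, D, hC, hCD, -, hgD, -⟩ := hJ j (by omega) ih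
        obtain ⟨k, hCk, hDk⟩ := hCD.exists_classAt
        exact ⟨D, hC.level_eq hCk ▸ hDk, hgD⟩
  filter_upwards [eventually_ge_atTop j₀] with j hj
  exact hJ j (by omega) (hall j hj)

theorem descC_of_quietAt (hgl : GlSpec A w gl) (hq : ∀ j ≥ J, QuietAt A w gl v j)
    {j j' : ℕ} (hJj : J ≤ j) (hjj' : j ≤ j') (hC : ClassAt A w C j) (hgC : gl C = v)
    (hD : ClassAt A w D j') (hgD : gl D = v) : DescC A w C D := by
  induction j', hjj' using Nat.le_induction generalizing D with
  | base =>
      rw [eq_of_gl_eq hgl hC hD (hgC.trans hgD.symm)]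
      exact .refl
  | succ j' hjj' ih =>
      obtain ⟨P, D', hP, hPD', hgP, hgD', -⟩ := hq j' (by omega)
      obtain ⟨k, hPk, hD'k⟩ := hPD'.exists_classAt
      obtain rfl := hP.level_eq hPk
      obtain rfl : D' = D := eq_of_gl_eq hgl hD'k hD (hgD'.trans hgD.symm)
      exact (ih hP hgP).tail hPD'

theorem liveAt_of_quietAt (hgl : GlSpec A w gl) (hq : ∀ j ≥ J, QuietAt A w gl v j)
    (hJj : J ≤ j) (hC : ClassAt A w C j) (hgC : gl C = v) : LiveAt A w C j := by
  refine ⟨hC, fun j' hjj' => ?_⟩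
  obtain ⟨D, -, hD, -, hgD, -, -⟩ := hq j' (by omega)
  exact ⟨D, hD, descC_of_quietAt hgl hq hJj hjj' hC hgC hD hgD⟩

end Forward

section ForwardBranch

open Filter

variable [Finite Q] {gl : Set (Q × ℕ) → ℕ} {v : ℕ} {b : ℕ → Set (Q × ℕ)}

theorem eventually_not_isFClass_of_frequently_gl_eq (hgl : GlSpec A w gl)
    (hns : ∀ m, ∀ᶠ i in atTop, ¬ SuccessfulAt A w gl m i) (hb : IsBranch A w b)
    (hv : ∃ᶠ j in atTop, gl (b j) = v) : ∀ᶠ i in atTop, ¬ IsFClass A (b i) := by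
  obtain ⟨J, hJ⟩ := eventually_atTop.mp
    (eventually_quietAt hgl hns v (hv.mono fun j h => ⟨b j, hb.1 j, h⟩))
  filter_upwards [eventually_gt_atTop J] with i hi
  obtain ⟨C, D, hC, hCD, -, hgD, hDF⟩ := hJ (i - 1) (by omega)
  obtain ⟨k, hCk, hDk⟩ := hCD.exists_classAt
  obtain rfl := hC.level_eq hCk
  rw [Nat.sub_add_cancel (by omega)] at hDk
  obtain ⟨j, hij, hgj⟩ := frequently_atTop.mp hv i
  rwa [eq_of_descC_of_descC (hb.1 i) hDk (hb.descC hij)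
    (descC_of_quietAt hgl hJ (by omega) hij hDk hgD (hb.1 j) hgj)]

theorem exists_frequently_gl_eq_of_isLeastChild (hgl : GlSpec A w gl) (hb : IsBranch A w b)
    {n : ℕ} (hleast : ∀ j ≥ n, IsLeastChild A w (b j) (b (j + 1))) :
    ∃ v, ∃ᶠ j in atTop, gl (b j) = v := by
  have hle : ∀ j ≥ n, gl (b j) ≤ gl (b n) := by
    intro j hj
    induction j, hj using Nat.le_induction with
    | base => exact le_rfl
    | succ j hj ih => exact (gl_le_of_isLeastChild hgl (hb.1 j) (hleast j hj)).trans ih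
  obtain ⟨v, -, hv⟩ := (eventually_atTop.mpr ⟨n, fun j hj => ⟨_, hle j hj, rfl⟩⟩ :
    ∀ᶠ j in atTop, ∃ v ∈ Set.Iic (gl (b n)), gl (b j) = v).exists_mem_frequently
      (Set.finite_Iic _)
  exact ⟨v, hv⟩

theorem isFirst_of_childC_of_classProfile_lt (hgl : GlSpec A w gl) {P R X : Set (Q × ℕ)}
    {i : ℕ} (hR : ClassAt A w R (i + 1)) (hPR : childC A w P R) (hPX : childC A w P X)
    (hlt : classProfile A w X < classProfile A w R) : IsFirst A w gl (gl R) R (i + 1) := by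
  obtain ⟨F, l, hF, hli⟩ := (isLmd_gl hgl hR).exists_isFirst
  have hFR := (isLmd_gl hgl hR).descC hF
  rcases hli.eq_or_lt with rfl | hli
  · rwa [hFR.eq_of_classAt hF.1 hR] at hF
  obtain ⟨k, hPk, hRk⟩ := hPR.exists_classAt
  obtain ⟨k', hPk', hXk⟩ := hPX.exists_classAt
  obtain rfl : k = i := by have := hR.level_eq hRk; omega
  obtain rfl := hPk.level_eq hPk'
  obtain ⟨P', hP', hFP', hP'R⟩ := hFR.exists_descC_childC hF.1 hR (by omega)
  obtain rfl := eq_of_descC_of_descC hP' hPk (.single hP'R) (.single hPR)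
  exact absurd ((isLmd_gl hgl hR).classProfile_le hF hXk (hFP'.tail hPX)) hlt.not_ge

theorem exists_frequently_gl_eq_of_isFirst (hgl : GlSpec A w gl)
    (hns : ∀ m, ∀ᶠ i in atTop, ¬ SuccessfulAt A w gl m i) (hb : IsBranch A w b) {ℓ m : ℕ}
    (hiso : ∀ j ≥ ℓ, ∀ D, LiveAt A w D j → DescC A w (b ℓ) D → D = b j)
    (hF : IsFirst A w gl m (b ℓ) ℓ) : ∃ v, ∃ᶠ j in atTop, gl (b j) = v := by
  have hlmd : ∀ᶠ j in atTop, ∃ v ∈ Set.Iic m, ∃ M, IsLmd A w gl m j M ∧ gl M = v := by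
    filter_upwards [eventually_ge_atTop ℓ] with j hj
    obtain ⟨M, hM⟩ := exists_isLmd hF (hb.1 j) (hb.descC hj)
    exact ⟨gl M, gl_le_of_isLmd hgl hM, M, hM, rfl⟩
  obtain ⟨v, -, hv⟩ := hlmd.exists_mem_frequently (Set.finite_Iic m)
  obtain ⟨J, hJ⟩ := eventually_atTop.mp
    (eventually_quietAt hgl hns v (hv.mono fun j ⟨M, hM, hgM⟩ => ⟨M, hM.1, hgM⟩))
  refine ⟨v, (hv.and_eventually (eventually_ge_atTop (J + ℓ))).mono
    fun j ⟨⟨M, hM, hgM⟩, hj⟩ => ?_⟩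
  rw [← hiso j (by omega) M (liveAt_of_quietAt hgl hJ (by omega) hM.1 hgM) (hM.descC hF), hgM]

/-- Some label recurs along the branch: if `b` is eventually the least child of its predecessor,
labels along `b` are eventually nonincreasing; otherwise `b` infinitely often leaves a smaller
sibling behind, and the next class on `b` then opens a fresh label whose leftmost descendants
eventually run along `b`. -/
theorem IsBranch.exists_frequently_gl_eq (hgl : GlSpec A w gl)
    (hns : ∀ m, ∀ᶠ i in atTop, ¬ SuccessfulAt A w gl m i) (hb : IsBranch A w b) :
    ∃ v, ∃ᶠ j in atTop, gl (b j) = v := by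
  obtain ⟨ℓ₀, hiso⟩ := hb.eventually_eq_of_liveAt_descC
  by_cases hright : ∃ᶠ ℓ in atTop, ∃ X, childC A w (b ℓ) X ∧
      classProfile A w X < classProfile A w (b (ℓ + 1))
  · obtain ⟨ℓ, ⟨X, hX, hlt⟩, hℓ⟩ :=
      (hright.and_eventually (eventually_ge_atTop ℓ₀)).exists
    exact exists_frequently_gl_eq_of_isFirst hgl hns hb (hiso (ℓ + 1) (by omega))
      (isFirst_of_childC_of_classProfile_lt hgl (hb.1 _) (hb.2 ℓ) hX hlt)
  · obtain ⟨n, hn⟩ := eventually_atTop.mp (not_frequently.mp hright)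
    exact exists_frequently_gl_eq_of_isLeastChild hgl hb fun j hj =>
      ⟨hb.2 j, fun X hX => not_lt.mp fun hlt => hn j hj ⟨X, hX, hlt⟩⟩

theorem frequently_successfulAt_of_treeAccepting (hgl : GlSpec A w gl) (hT : TreeAccepting A w) :
    ∃ m, ∃ᶠ i in atTop, SuccessfulAt A w gl m i := by
  by_contra! hns
  obtain ⟨b, hb, hbF⟩ := hT
  obtain ⟨v, hv⟩ := hb.exists_frequently_gl_eq hgl hns
  obtain ⟨n, hn⟩ :=
    eventually_atTop.mp (eventually_not_isFClass_of_frequently_gl_eq hgl hns hb hv)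
  obtain ⟨i, hi, hiF⟩ := hbF n
  exact hn i hi hiF

end ForwardBranch

theorem accepting_iff_label_successful_io_general [Fintype Q]
    (A : NBW Alph Q) (w : ℕ → Alph) (gl : Set (Q × ℕ) → ℕ) (hgl : GlSpec A w gl) :
    TreeAccepting A w ↔ ∃ m, { i | SuccessfulAt A w gl m i }.Infinite := by
  simp only [← Nat.frequently_atTop_iff_infinite]
  exact ⟨frequently_successfulAt_of_treeAccepting hgl,
    fun ⟨_, hm⟩ => treeAccepting_of_frequently_successfulAt hgl hm⟩

/-- Theorem: `T` is accepting iff some label is successful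
infinitely often. -/
theorem accepting_iff_label_successful_io [Fintype Alph] [Fintype Q]
    (A : NBW Alph Q) (w : ℕ → Alph) (gl : Set (Q × ℕ) → ℕ) (hgl : GlSpec A w gl) :
    TreeAccepting A w ↔ ∃ m, { i | SuccessfulAt A w gl m i }.Infinite :=
  accepting_iff_label_successful_io_general A w gl hgl
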